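/- arXiv:2406.12855 — 4 statements merged into one kernel-verified Lean document; each statement's English description precedes it below -/
import Mathlib

section
/- Let ψ : ℝ⁴ → Cl be differentiable with ∂_μψ(x) = K_μ(x)·ψ(x) for all x and all μ ∈ {0,1,2,3}, where K_μ(x) := (1/4)·Σ_{I,J=0}^{9} W_μ^{IJ}(x)·e_I·e_J for differentiable functions W_μ^{IJ} : ℝ⁴ → ℝ satisfying W_μ^{IJ} = −W_μ^{JI}. Then for every I ∈ {0,…,9} and every μ ∈ {0,1,2,3}, the map x ↦ reverse(ψ(x))·e_I·ψ(x) is differentiable and ∂_μ( reverse(ψ)·e_I·ψ ) = Σ_{K=0}^{9} ( Σ_{J=0}^{9} η_{IJ}·W_μ^{JK} ) · reverse(ψ)·e_K·ψ. (That is, the deformed frame e_I ↦ reverse(ψ)e_Iψ satisfies the Cartan moving-frame equation d𝐞_I = ω_I^J 𝐞_J with connection coefficients ω_{μI}^K = Σ_J η_{IJ}W_μ^{JK}.) -/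
open CliffordAlgebra

noncomputable section

/-- The Minkowski signs `(-1,1,…,1)` on `ℝ^{10}`. -/
def ηv : Fin 10 → ℝ := fun I => if I = 0 then -1 else 1

/-- The Minkowski metric `η = diag(-1,1,…,1)` as a matrix. -/
def ηm : Fin 10 → Fin 10 → ℝ := fun I J => if I = J then ηv I else 0

/-- The Minkowski quadratic form `Q(x) = -x₀² + x₁² + ⋯ + x₉²` on `ℝ^{10}`. -/
def Qm : QuadraticForm ℝ (Fin 10 → ℝ) := QuadraticMap.weightedSumSquares ℝ ηv

/-- The Clifford algebra of the Minkowski form on `ℝ^{10}`. -/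
abbrev Cl := CliffordAlgebra Qm

/-- The images `e_I` of the standard basis vectors of `ℝ^{10}` in `Cl`. -/
def e (I : Fin 10) : Cl := ι Qm (Pi.single I 1)

/-- Inclusion of tangent indices `{0,…,3}` into `{0,…,9}`. -/
def tIdx (μ : Fin 4) : Fin 10 := ⟨μ.1, by omega⟩

/-- Inclusion of normal indices `{4,…,9}` into `{0,…,9}`. -/
def nIdx (i : Fin 6) : Fin 10 := ⟨i.1 + 4, by omega⟩

/-!
Differentiating the sandwich `reverse ψ * e_I * ψ` along `∂_μ ψ = K_μ ψ` gives
`reverse ψ * (e_I K_μ - K_μ e_I) * ψ`, because reversion negates the bivector `K_μ`.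
The commutator of a vector with a bivector is a vector,
`[e_I, e_A e_B] = 2 η_{IA} e_B - 2 η_{IB} e_A`, and for antisymmetric coefficients the two terms
contribute equally, so `[e_I, K_μ] = Σ_K (Σ_J η_{IJ} W_μ^{JK}) e_K`.
The norm on `Cl` is arbitrary; the product rule still applies because `Cl` is finite-dimensional
(it is linearly isomorphic to the exterior algebra of `ℝ^{10}`), so every bilinear map on it is
continuous.
-/

instance CliffordAlgebra.instFiniteDimensional {K M : Type*} [Field K] [Invertible (2 : K)]
    [AddCommGroup M] [Module K M] [FiniteDimensional K M] (Q : QuadraticForm K M) :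
    FiniteDimensional K (CliffordAlgebra Q) :=
  Module.Finite.of_basis ((Module.finBasis K M).ExteriorAlgebra.map (equivExterior Q).symm)

section
variable {R M κ : Type*} [CommRing R] [AddCommGroup M] [Module R M] {Q : QuadraticForm R M}
  [Fintype κ]

theorem CliffordAlgebra.ι_mul_ι_mul_ι_sub (u a b : M) :
    ι Q u * (ι Q a * ι Q b) - ι Q a * ι Q b * ι Q u =
      QuadraticMap.polar Q u a • ι Q b - QuadraticMap.polar Q u b • ι Q a := by
  rw [Algebra.smul_def, Algebra.smul_def, Algebra.commutes (QuadraticMap.polar Q u b),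
    ← ι_mul_ι_add_swap, ← ι_mul_ι_add_swap]
  noncomm_ring

theorem CliffordAlgebra.reverse_mul_mul_add_of_reverse_eq_neg {K : CliffordAlgebra Q}
    (hK : reverse K = -K) (x P : CliffordAlgebra Q) :
    reverse (K * P) * x * P + reverse P * x * (K * P) = reverse P * (x * K - K * x) * P := by
  rw [reverse.map_mul, hK]
  noncomm_ring

theorem CliffordAlgebra.reverse_sum_smul_ι_mul_ι {w : κ → κ → R} (hw : ∀ A B, w A B = -w B A)
    (v : κ → M) :
    reverse (∑ A, ∑ B, w A B • (ι Q (v A) * ι Q (v B))) =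
      -∑ A, ∑ B, w A B • (ι Q (v A) * ι Q (v B)) := by
  simp only [map_sum, map_smul, reverse.map_mul, reverse_ι]
  rw [Finset.sum_comm]
  simp only [← Finset.sum_neg_distrib, ← neg_smul, ← hw]

theorem CliffordAlgebra.ι_mul_sum_smul_ι_mul_ι_sub {w : κ → κ → R} (hw : ∀ A B, w A B = -w B A)
    (v : κ → M) (u : M) :
    ι Q u * (∑ A, ∑ B, w A B • (ι Q (v A) * ι Q (v B))) -
        (∑ A, ∑ B, w A B • (ι Q (v A) * ι Q (v B))) * ι Q u =
      (2 : R) • ∑ B, (∑ A, QuadraticMap.polar Q u (v A) * w A B) • ι Q (v B) := by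
  have hterm : ∀ A B, ι Q u * (w A B • (ι Q (v A) * ι Q (v B))) -
      w A B • (ι Q (v A) * ι Q (v B)) * ι Q u =
        (QuadraticMap.polar Q u (v A) * w A B) • ι Q (v B) +
          (QuadraticMap.polar Q u (v B) * w B A) • ι Q (v A) := by
    intro A B
    rw [mul_smul_comm, smul_mul_assoc, ← smul_sub, ι_mul_ι_mul_ι_sub, hw B A]
    module
  simp only [Finset.mul_sum, Finset.sum_mul, ← Finset.sum_sub_distrib, hterm,
    Finset.sum_add_distrib]
  rw [Finset.sum_comm (f := fun A B => (QuadraticMap.polar Q u (v B) * w B A) • ι Q (v A)),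
    two_smul, Finset.sum_comm]
  simp only [Finset.sum_smul]

end

section
variable {𝕜 E F G H : Type*} [NontriviallyNormedField 𝕜] [CompleteSpace 𝕜]
  [NormedAddCommGroup E] [NormedSpace 𝕜 E] [FiniteDimensional 𝕜 E]
  [NormedAddCommGroup F] [NormedSpace 𝕜 F] [FiniteDimensional 𝕜 F]
  [NormedAddCommGroup G] [NormedSpace 𝕜 G]
  [NormedAddCommGroup H] [NormedSpace 𝕜 H]

theorem LinearMap.differentiable_bilinear (B : E →ₗ[𝕜] F →ₗ[𝕜] G) {f : H → E} {g : H → F}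
    (hf : Differentiable 𝕜 f) (hg : Differentiable 𝕜 g) :
    Differentiable 𝕜 (fun y => B (f y) (g y)) := fun x =>
  (B.toContinuousBilinearMap.hasFDerivAt_of_bilinear (hf x).hasFDerivAt
    (hg x).hasFDerivAt).differentiableAt

theorem LinearMap.fderiv_bilinear_apply (B : E →ₗ[𝕜] F →ₗ[𝕜] G) {f : H → E} {g : H → F} {x : H}
    (hf : DifferentiableAt 𝕜 f x) (hg : DifferentiableAt 𝕜 g x) (v : H) :
    fderiv 𝕜 (fun y => B (f y) (g y)) x v =
      B (fderiv 𝕜 f x v) (g x) + B (f x) (fderiv 𝕜 g x v) := by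
  change fderiv 𝕜 (fun y => B.toContinuousBilinearMap (f y) (g y)) x v = _
  rw [B.toContinuousBilinearMap.fderiv_of_bilinear hf hg]
  simp [add_comm]

end

theorem QuadraticMap.polar_weightedSumSquares {R n : Type*} [CommRing R] [Fintype n]
    (w : n → R) (x y : n → R) :
    polar (weightedSumSquares R w) x y = ∑ k, 2 * w k * (x k * y k) := by
  simp only [polar, weightedSumSquares_apply, ← Finset.sum_sub_distrib, Pi.add_apply, smul_eq_mul]
  exact Finset.sum_congr rfl fun k _ => by ring

theorem polar_Qm_single (I J : Fin 10) :
    QuadraticMap.polar Qm (Pi.single I 1) (Pi.single J 1) = 2 * ηm I J := by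
  rw [Qm, QuadraticMap.polar_weightedSumSquares]
  simp only [Pi.single_apply, ηm, eq_comm]
  split_ifs <;> simp_all

def spinConnection (w : Fin 10 → Fin 10 → ℝ) : Cl :=
  (1 / 4 : ℝ) • ∑ A, ∑ B, w A B • (e A * e B)

theorem reverse_spinConnection {w : Fin 10 → Fin 10 → ℝ} (hw : ∀ A B, w A B = -w B A) :
    reverse (spinConnection w) = -spinConnection w := by
  simp only [spinConnection, map_smul, e, reverse_sum_smul_ι_mul_ι hw, smul_neg]

theorem e_mul_spinConnection_sub {w : Fin 10 → Fin 10 → ℝ} (hw : ∀ A B, w A B = -w B A)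
    (I : Fin 10) :
    e I * spinConnection w - spinConnection w * e I = ∑ K, (∑ J, ηm I J * w J K) • e K := by
  simp only [spinConnection, e]
  rw [mul_smul_comm, smul_mul_assoc, ← smul_sub, ι_mul_sum_smul_ι_mul_ι_sub hw]
  simp only [polar_Qm_single, mul_assoc, ← Finset.mul_sum, smul_smul, Finset.smul_sum]
  exact Finset.sum_congr rfl fun K _ => by congr 1; ring

/-- If `ψ : ℝ⁴ → Cl` satisfies `∂_μψ = K_μψ` with `K_μ = (1/4)·Σ_{I,J} W_μ^{IJ} e_I e_J`
for antisymmetric `W`, then the deformed frame `e_I ↦ reverse(ψ)·e_I·ψ` is differentiable and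
satisfies the Cartan moving-frame equation with connection `ω_{μI}^K = Σ_J η_{IJ} W_μ^{JK}`. -/
theorem stmt_0 (nCl : AddGroupNorm Cl)
    (hns : ∀ (c : ℝ) (x : Cl), nCl (c • x) ≤ ‖c‖ * nCl x) :
    letI : NormedAddCommGroup Cl := nCl.toNormedAddCommGroup
    letI : NormedSpace ℝ Cl := { norm_smul_le := hns }
    ∀ (ψ : (Fin 4 → ℝ) → Cl) (W : Fin 4 → Fin 10 → Fin 10 → (Fin 4 → ℝ) → ℝ),
      Differentiable ℝ ψ →
      (∀ μ I J, Differentiable ℝ (W μ I J)) →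
      (∀ μ I J x, W μ I J x = - W μ J I x) →
      (∀ μ x, fderiv ℝ ψ x (Pi.single μ 1) =
        ((1/4 : ℝ) • ∑ I : Fin 10, ∑ J : Fin 10, W μ I J x • (e I * e J)) * ψ x) →
      ∀ (I : Fin 10) (μ : Fin 4),
        Differentiable ℝ (fun y => reverse (Q := Qm) (ψ y) * e I * ψ y) ∧
        ∀ x, fderiv ℝ (fun y => reverse (Q := Qm) (ψ y) * e I * ψ y) x (Pi.single μ 1) =
          ∑ K : Fin 10, (∑ J : Fin 10, ηm I J * W μ J K x) •
            (reverse (Q := Qm) (ψ x) * e K * ψ x) := by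
  intro ψ W hψ _ hW hD I μ
  let _ : NormedAddCommGroup Cl := nCl.toNormedAddCommGroup
  let _ : NormedSpace ℝ Cl := { norm_smul_le := hns }
  let B : Cl →ₗ[ℝ] Cl →ₗ[ℝ] Cl := LinearMap.mul ℝ Cl ∘ₗ LinearMap.mulRight ℝ (e I) ∘ₗ reverse
  refine ⟨B.differentiable_bilinear hψ hψ, fun x => ?_⟩
  change fderiv ℝ (fun y => B (ψ y) (ψ y)) x _ = _
  rw [B.fderiv_bilinear_apply (hψ x) (hψ x), hD μ x]
  change reverse (spinConnection (W μ · · x) * ψ x) * e I * ψ x +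
    reverse (ψ x) * e I * (spinConnection (W μ · · x) * ψ x) = _
  rw [reverse_mul_mul_add_of_reverse_eq_neg (reverse_spinConnection (hW μ · · x)),
    e_mul_spinConnection_sub (hW μ · · x), Finset.mul_sum, Finset.sum_mul]
  simp only [mul_smul_comm, smul_mul_assoc, mul_assoc]
end
end

section
/- Let ψ : ℝ⁴ → Cl be twice continuously differentiable, let K_μ : ℝ⁴ → Cl (μ ∈ {0,1,2,3}) be differentiable maps with ∂_μψ(x) = K_μ(x)·ψ(x) for all x and μ, and suppose ψ(x)·reverse(ψ(x)) = 1 for all x. Then for all μ, ν ∈ {0,1,2,3} and all x: ∂_νK_μ(x) − ∂_μK_ν(x) = K_ν(x)·K_μ(x) − K_μ(x)·K_ν(x). (Integrability of the Killing spin field equation forces the connection K to be flat.) -/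
open CliffordAlgebra

noncomputable section

/-!
Differentiating `∂_μψ = K_μψ` once more gives `∂_ν∂_μψ = (∂_νK_μ + K_μK_ν)ψ`. Symmetry of second
derivatives equates this with `(∂_μK_ν + K_νK_μ)ψ`, and `ψ` can be cancelled on the right because
`reverse ψ` is a right inverse. The norm on `Cl` is arbitrary, so the product rule needs
multiplication to be continuous; it is, because `Cl` is linearly isomorphic to the exterior algebra
and hence finite-dimensional.
-/

instance CliffordAlgebra.instModuleFinite {R M : Type*} [CommRing R] [StrongRankCondition R]
    [AddCommGroup M] [Module R M] [Module.Free R M] [Module.Finite R M] [Invertible (2 : R)]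
    (Q : QuadraticForm R M) : Module.Finite R (CliffordAlgebra Q) :=
  have : Module.Finite R (ExteriorAlgebra R M) := .of_basis (Module.finBasis R M).ExteriorAlgebra
  .equiv (CliffordAlgebra.equivExterior Q).symm

section
variable {E F : Type*} [NormedAddCommGroup E] [NormedSpace ℝ E] [NormedAddCommGroup F]
  [NormedSpace ℝ F] (B : F →L[ℝ] F →L[ℝ] F) {ψ : E → F} {x : E}

theorem fderiv_fderiv_apply_of_fderiv_apply_eq_bilinear {K : E → F} {u : E}
    (hψ : DifferentiableAt ℝ ψ x) (hψ' : DifferentiableAt ℝ (fderiv ℝ ψ) x)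
    (hK : DifferentiableAt ℝ K x) (hψK : ∀ y, fderiv ℝ ψ y u = B (K y) (ψ y)) (v : E) :
    fderiv ℝ (fderiv ℝ ψ) x v u = B (fderiv ℝ K x v) (ψ x) + B (K x) (fderiv ℝ ψ x v) := by
  calc fderiv ℝ (fderiv ℝ ψ) x v u = fderiv ℝ (fun y => fderiv ℝ ψ y u) x v := by
        simp [fderiv_clm_apply hψ' (differentiableAt_const u)]
    _ = fderiv ℝ (fun y => B (K y) (ψ y)) x v := by simp only [hψK]
    _ = _ := by simp [B.fderiv_of_bilinear hK hψ, add_comm]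

theorem integrability_condition_of_fderiv_apply_eq_bilinear {Ku Kv : E → F} {u v : E}
    (hψ : Differentiable ℝ ψ) (hψ' : DifferentiableAt ℝ (fderiv ℝ ψ) x)
    (hKu : DifferentiableAt ℝ Ku x) (hKv : DifferentiableAt ℝ Kv x)
    (hψKu : ∀ y, fderiv ℝ ψ y u = B (Ku y) (ψ y)) (hψKv : ∀ y, fderiv ℝ ψ y v = B (Kv y) (ψ y)) :
    B (fderiv ℝ Ku x v) (ψ x) + B (Ku x) (B (Kv x) (ψ x)) =
      B (fderiv ℝ Kv x u) (ψ x) + B (Kv x) (B (Ku x) (ψ x)) := by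
  rw [← hψKu, ← hψKv, ← fderiv_fderiv_apply_of_fderiv_apply_eq_bilinear B (hψ x) hψ' hKu hψKu,
    ← fderiv_fderiv_apply_of_fderiv_apply_eq_bilinear B (hψ x) hψ' hKv hψKv]
  exact second_derivative_symmetric (fun y => (hψ y).hasFDerivAt) hψ'.hasFDerivAt v u

end

/-- Integrability of `∂_μψ = K_μψ` for an invertible (normalized) spin field forces the
connection `K` to be flat: `∂_νK_μ − ∂_μK_ν = K_νK_μ − K_μK_ν`. -/
theorem stmt_3 (nCl : AddGroupNorm Cl)
    (hns : ∀ (c : ℝ) (x : Cl), nCl (c • x) ≤ ‖c‖ * nCl x) :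
    letI : NormedAddCommGroup Cl := nCl.toNormedAddCommGroup
    letI : NormedSpace ℝ Cl := { norm_smul_le := hns }
    ∀ (ψ : (Fin 4 → ℝ) → Cl) (K : Fin 4 → (Fin 4 → ℝ) → Cl),
      ContDiff ℝ 2 ψ →
      (∀ μ, Differentiable ℝ (K μ)) →
      (∀ μ x, fderiv ℝ ψ x (Pi.single μ 1) = K μ x * ψ x) →
      (∀ x, ψ x * reverse (Q := Qm) (ψ x) = 1) →
      ∀ (μ ν : Fin 4) (x : Fin 4 → ℝ),
        fderiv ℝ (K μ) x (Pi.single ν 1) - fderiv ℝ (K ν) x (Pi.single μ 1) =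
          K ν x * K μ x - K μ x * K ν x := by
  let : NormedAddCommGroup Cl := nCl.toNormedAddCommGroup
  let : NormedSpace ℝ Cl := { norm_smul_le := hns }
  intro ψ K hψ hK hψK hrev μ ν x
  let mul : Cl →L[ℝ] Cl →L[ℝ] Cl := LinearMap.toContinuousLinearMap
    (LinearMap.toContinuousLinearMap.toLinearMap ∘ₗ LinearMap.mul ℝ Cl)
  have hmul (a b : Cl) : mul a b = a * b := rfl
  have hsymm := integrability_condition_of_fderiv_apply_eq_bilinear mul
    (hψ.differentiable two_ne_zero) ((hψ.fderiv_right le_rfl).differentiable one_ne_zero x)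
    (hK μ x) (hK ν x) (hψK μ) (hψK ν)
  simp only [hmul, ← mul_assoc, ← add_mul] at hsymm
  rw [sub_eq_sub_iff_add_eq_add, add_comm (K ν x * K μ x)]
  exact isRightRegular_of_mul_eq_one (hrev x) hsymm
end
end

section
/- Let u, v ∈ M with Q(u) = 1, Q(v) = 1 and polar(u,v) = 0, and for θ ∈ ℝ set R(θ) := cos(θ/2)·1 + sin(θ/2)·ι(u)ι(v) ∈ CliffordAlgebra Q. Then reverse(R(θ))·R(θ) = 1 and reverse(R(θ))·ι(u)·R(θ) = cos(θ)·ι(u) + sin(θ)·ι(v). (The bivector ι(u)ι(v) generates the rotation of the (u,v)-plane by angle θ.) -/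
/-!
The bivector `B = ι(u)ι(v)` of an orthonormal pair squares to `-1`, so
`cis B θ = cos θ + sin θ • B` behaves like `exp (θ B)`:
`cis B α * cis B β = cis B (α + β)`.
Reversion sends `B` to `-B`, hence `reverse (R θ) = cis B (-θ/2)`, which gives the first claim.
Since `B` anticommutes with `ι(u)`, moving `ι(u)` to the left of `cis B (-θ/2)` flips the angle,
so `reverse (R θ) * ι(u) * R θ = ι(u) * cis B θ = cos θ • ι(u) + sin θ • ι(v)`.
-/

open CliffordAlgebra

section Cis

variable {A : Type*} [Ring A] [Algebra ℝ A] (B : A)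

noncomputable def cis (θ : ℝ) : A := Real.cos θ • 1 + Real.sin θ • B

theorem cis_zero : cis B 0 = 1 := by simp [cis]

variable {B}

theorem cis_mul_cis (hB : B * B = -1) (α β : ℝ) : cis B α * cis B β = cis B (α + β) := by
  simp only [cis, Real.cos_add, Real.sin_add, add_mul, mul_add, smul_mul_smul_comm, one_mul,
    mul_one, hB]
  match_scalars <;> ring

theorem cis_mul_of_mul_eq_neg {x : A} (hx : B * x = -(x * B)) (θ : ℝ) :
    cis B θ * x = x * cis B (-θ) := by
  simp only [cis, Real.cos_neg, Real.sin_neg, add_mul, mul_add, smul_mul_assoc, mul_smul_comm,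
    one_mul, mul_one, hx, neg_smul, smul_neg, mul_neg]

end Cis

section Bivector

variable {R M : Type*} [CommRing R] [AddCommGroup M] [Module R M] {Q : QuadraticForm R M}
  {u v : M}

theorem ι_mul_ι_mul_ι_mul_ι_of_isOrtho (h : Q.IsOrtho u v) :
    ι Q u * ι Q v * (ι Q u * ι Q v) = -algebraMap R _ (Q u * Q v) := by
  rw [mul_ι_mul_ι_mul_comm_of_isOrtho _ h.symm, ι_sq_scalar, ι_sq_scalar, map_mul]

theorem reverse_ι_mul_ι_of_isOrtho (h : Q.IsOrtho u v) :
    reverse (ι Q u * ι Q v) = -(ι Q u * ι Q v) := by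
  rw [reverse.map_mul, reverse_ι, reverse_ι, ι_mul_ι_comm_of_isOrtho h.symm]

theorem ι_mul_ι_mul_ι_of_isOrtho (h : Q.IsOrtho u v) :
    ι Q u * ι Q v * ι Q u = -(ι Q u * (ι Q u * ι Q v)) := by
  rw [mul_assoc, ι_mul_ι_comm_of_isOrtho h.symm, mul_neg]

end Bivector

theorem reverse_cis {M : Type*} [AddCommGroup M] [Module ℝ M] {Q : QuadraticForm ℝ M}
    {B : CliffordAlgebra Q} (hB : reverse B = -B) (θ : ℝ) :
    reverse (cis B θ) = cis B (-θ) := by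
  simp only [cis, map_add, map_smul, reverse.map_one, hB, Real.cos_neg, Real.sin_neg, neg_smul,
    smul_neg]

/-- For orthogonal unit vectors `u, v`, the rotor `R(θ) = cos(θ/2)·1 + sin(θ/2)·ι(u)ι(v)`
is normalized and rotates `ι(u)` by angle `θ` in the `(u,v)`-plane. -/
theorem stmt_13 {M : Type*} [AddCommGroup M] [Module ℝ M] (Q : QuadraticForm ℝ M)
    (u v : M) (hu : Q u = 1) (hv : Q v = 1) (huv : QuadraticMap.polar Q u v = 0)
    (R : ℝ → CliffordAlgebra Q)
    (hR : ∀ θ : ℝ, R θ =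
      Real.cos (θ / 2) • (1 : CliffordAlgebra Q) + Real.sin (θ / 2) • (ι Q u * ι Q v)) :
    ∀ θ : ℝ,
      reverse (Q := Q) (R θ) * R θ = 1 ∧
      reverse (Q := Q) (R θ) * ι Q u * R θ = Real.cos θ • ι Q u + Real.sin θ • ι Q v := by
  intro θ
  have horth : Q.IsOrtho u v := QuadraticMap.isOrtho_polarBilin.mp huv
  have hB : ι Q u * ι Q v * (ι Q u * ι Q v) = -1 := by
    rw [ι_mul_ι_mul_ι_mul_ι_of_isOrtho horth, hu, hv, mul_one, map_one]
  have hRθ : R θ = cis (ι Q u * ι Q v) (θ / 2) := hR θ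
  rw [hRθ, reverse_cis (reverse_ι_mul_ι_of_isOrtho horth)]
  refine ⟨by rw [cis_mul_cis hB, neg_add_cancel, cis_zero], ?_⟩
  rw [cis_mul_of_mul_eq_neg (ι_mul_ι_mul_ι_of_isOrtho horth), neg_neg, mul_assoc,
    cis_mul_cis hB, add_halves]
  simp only [cis, mul_add, mul_smul_comm, mul_one, ← mul_assoc, ι_sq_scalar, hu, map_one,
    one_mul]
end

section
/- For x = (x₀,x₁,x₂,x₃) ∈ ℝ⁴ write r² := x₁² + x₂² + x₃², and define the immersion q : ℝ⁴ → ℝ^{10} by q(x) := x₀·b₀ + (1+r²)^{−1}·( x₁·b₁ + x₂·b₂ + x₃·b₃ + b₅ ). Then the pullback of the Minkowski bilinear form B along q is the diagonal metric g = diag(−1, (1+r²)^{−2}, (1+r²)^{−2}, (1+r²)^{−2}); that is, for all x ∈ ℝ⁴ and all μ, ν ∈ {0,1,2,3}: B( ∂_μ q(x), ∂_ν q(x) ) = −1 if μ = ν = 0, = (1+r²)^{−2} if μ = ν ∈ {1,2,3}, and = 0 if μ ≠ ν. -/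
/-!
Write `s = 1 + r²` and `u = x₁b₁ + x₂b₂ + x₃b₃ + b₅`, so that `q = x₀b₀ + s⁻¹u` and
`∂_v q = v₀b₀ + s⁻¹(v₁b₁ + v₂b₂ + v₃b₃) − 2⟨x,v⟩s⁻²u` with `⟨x,v⟩ = x₁v₁ + x₂v₂ + x₃v₃`.
Since `B(u,u) = s`, the two cross terms `−2⟨x,v⟩⟨x,w⟩s⁻³` cancel against `4⟨x,v⟩⟨x,w⟩s⁻⁴B(u,u)`,
leaving `B(∂_v q, ∂_w q) = −v₀w₀ + s⁻²(v₁w₁ + v₂w₂ + v₃w₃)`.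
-/

noncomputable section

/-- The Minkowski bilinear form `B(x,y) = −x₀y₀ + Σ_{k=1}^{9} x_k y_k` on `ℝ^{10}`. -/
def B (x y : Fin 10 → ℝ) : ℝ := ∑ I : Fin 10, ηv I * x I * y I

/-- The standard basis vectors `b_I` of `ℝ^{10}`. -/
def bvec (I : Fin 10) : Fin 10 → ℝ := Pi.single I 1

/-- `r² = x₁² + x₂² + x₃²`. -/
def r2 (x : Fin 4 → ℝ) : ℝ := (x 1) ^ 2 + (x 2) ^ 2 + (x 3) ^ 2

/-- The immersion `q(x) = x₀b₀ + (1+r²)⁻¹(x₁b₁ + x₂b₂ + x₃b₃ + b₅)` of `ℝ⁴` in `ℝ^{10}`. -/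
def q19 (x : Fin 4 → ℝ) : Fin 10 → ℝ :=
  x 0 • bvec 0 + (1 + r2 x)⁻¹ • (x 1 • bvec 1 + x 2 • bvec 2 + x 3 • bvec 3 + bvec 5)

lemma one_add_r2_pos (x : Fin 4 → ℝ) : 0 < 1 + r2 x := by
  unfold r2; positivity

lemma fderiv_q19_apply (x v : Fin 4 → ℝ) :
    fderiv ℝ q19 x v =
      v 0 • bvec 0 + (1 + r2 x)⁻¹ • (v 1 • bvec 1 + v 2 • bvec 2 + v 3 • bvec 3)
        - (2 * (x 1 * v 1 + x 2 * v 2 + x 3 * v 3) / (1 + r2 x) ^ 2) •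
          (x 1 • bvec 1 + x 2 • bvec 2 + x 3 • bvec 3 + bvec 5) := by
  have hs := (one_add_r2_pos x).ne'
  have hr2 : HasFDerivAt r2 _ x := (((hasFDerivAt_apply (𝕜 := ℝ) 1 x).pow 2).add
    ((hasFDerivAt_apply (𝕜 := ℝ) 2 x).pow 2)).add ((hasFDerivAt_apply (𝕜 := ℝ) 3 x).pow 2)
  have hinv := (hasFDerivAt_inv hs).comp x (hr2.const_add 1)
  have hu := ((((hasFDerivAt_apply (𝕜 := ℝ) 1 x).smul_const (bvec 1)).add
    ((hasFDerivAt_apply (𝕜 := ℝ) 2 x).smul_const (bvec 2))).add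
    ((hasFDerivAt_apply (𝕜 := ℝ) 3 x).smul_const (bvec 3))).add_const (bvec 5)
  have hq : HasFDerivAt q19 _ x :=
    ((hasFDerivAt_apply (𝕜 := ℝ) 0 x).smul_const (bvec 0)).add (hinv.smul hu)
  rw [hq.fderiv]
  simp only [add_apply, smul_apply, ContinuousLinearMap.smulRight_apply,
    ContinuousLinearMap.comp_apply, ContinuousLinearMap.proj_apply,
    ContinuousLinearMap.toSpanSingleton_apply, Function.comp_apply]
  match_scalars <;> simp only [smul_eq_mul] <;> ring

lemma B_fderiv_q19 (x v w : Fin 4 → ℝ) :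
    B (fderiv ℝ q19 x v) (fderiv ℝ q19 x w) =
      -(v 0 * w 0) + ((1 + r2 x) ^ 2)⁻¹ * (v 1 * w 1 + v 2 * w 2 + v 3 * w 3) := by
  have hs := (one_add_r2_pos x).ne'
  simp only [fderiv_q19_apply, B, Fin.sum_univ_succ, Fin.sum_univ_zero, ηv, bvec,
    Pi.add_apply, Pi.sub_apply, Pi.smul_apply, Pi.single_apply, smul_eq_mul, Fin.reduceEq,
    ↓reduceIte, Fin.reduceSucc]
  field_simp
  unfold r2
  ring

/-- The pullback of the Minkowski bilinear form along `q19` is the diagonal metric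
`g = diag(−1, (1+r²)⁻², (1+r²)⁻², (1+r²)⁻²)`. -/
theorem stmt_19 :
    ∀ (x : Fin 4 → ℝ) (μ ν : Fin 4),
      B (fderiv ℝ q19 x (Pi.single μ 1)) (fderiv ℝ q19 x (Pi.single ν 1)) =
        if μ = ν then (if μ = 0 then (-1 : ℝ) else ((1 + r2 x) ^ 2)⁻¹) else 0 := by
  intro x μ ν
  rw [B_fderiv_q19]
  fin_cases μ <;> fin_cases ν <;> simp
end
end
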